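/- arXiv:math/0604474 — 3 statements merged into one kernel-verified Lean document; each statement's English description precedes it below -/
import Mathlib

section
/- Let β > 0, γ > 0, δ be real numbers, let ω be a real number, and let s be a real number with s > |ω|^{1/β} (so that 1 − ω s^{−β} > 0). Then ∫₀^∞ t^{γ−1} e^{−st} E^δ_{β,γ}(ω t^β) dt = s^{−γ} (1 − ω s^{−β})^{−δ}. -/
/-!
Expanding `E^δ_{β,γ}(ω t^β)` as a power series in `t^β`, every term is a Gamma integral,
`∫₀^∞ t^{nβ+γ-1} e^{-st} dt = Γ(nβ+γ) s^{-(nβ+γ)}`, whose `Γ(nβ+γ)` cancels the one in the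
coefficient. What is left is `s^{-γ}` times the binomial series `∑ (δ)_n xⁿ / n! = (1 - x)^{-δ}`
at `x = ω s^{-β}`, and `|x| < 1` is exactly the hypothesis on `s`. Sum and integral may be
interchanged because the same computation with absolute values gives the binomial series
of `|(δ)_n| |x|ⁿ / n!`, which converges.
-/

open Real Set MeasureTheory Polynomial

/-- The generalized (Prabhakar) Mittag-Leffler function (real version)
`E^δ_{α,β}(x) = ∑_{n=0}^∞ (δ)_n x^n / (Γ(nα+β) · n!)` for real `α, β > 0`, `δ, x ∈ ℝ`,
where `(δ)_n` is the Pochhammer symbol and `Γ` is the Gamma function. -/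
noncomputable def prabhakarML (α β δ : ℝ) (x : ℝ) : ℝ :=
  ∑' n : ℕ, (ascPochhammer ℝ n).eval δ * x ^ n /
    (Real.Gamma (n * α + β) * (n.factorial : ℝ))

theorem Ring.choose_add_sub_one_eq_ascPochhammer_eval_div_factorial (δ : ℝ) (n : ℕ) :
    Ring.choose (δ + n - 1) n = (ascPochhammer ℝ n).eval δ / n.factorial := by
  rw [← Ring.multichoose_eq, eq_div_iff (by positivity), mul_comm, ← nsmul_eq_mul,
    Ring.factorial_nsmul_multichoose_eq_ascPochhammer, ascPochhammer_smeval_cast,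
    ascPochhammer_smeval_eq_eval]

theorem Real.mem_eball_zero_one_of_abs_lt_one {x : ℝ} (hx : |x| < 1) :
    x ∈ Metric.eball (0 : ℝ) 1 := by
  simpa [Metric.mem_eball, edist_dist, Real.dist_eq] using hx

theorem hasSum_ascPochhammer_eval_mul_pow_div_factorial (δ : ℝ) {x : ℝ} (hx : |x| < 1) :
    HasSum (fun n => (ascPochhammer ℝ n).eval δ * x ^ n / n.factorial) ((1 - x) ^ (-δ)) := by
  have := (one_div_one_sub_rpow_hasFPowerSeriesOnBall_zero δ).hasSum
    (mem_eball_zero_one_of_abs_lt_one hx)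
  simp only [FormalMultilinearSeries.ofScalars_apply_eq, zero_add, smul_eq_mul,
    Ring.choose_add_sub_one_eq_ascPochhammer_eval_div_factorial, div_mul_eq_mul_div] at this
  rwa [rpow_neg (by linarith [(abs_lt.mp hx).2]), ← one_div]

theorem summable_abs_ascPochhammer_eval_mul_pow_div_factorial (δ : ℝ) {x : ℝ} (hx : |x| < 1) :
    Summable (fun n => |(ascPochhammer ℝ n).eval δ * x ^ n / n.factorial|) := by
  have hp := one_div_one_sub_rpow_hasFPowerSeriesOnBall_zero δ
  have := FormalMultilinearSeries.summable_norm_apply _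
    (Metric.eball_subset_eball hp.r_le (mem_eball_zero_one_of_abs_lt_one hx))
  simpa only [FormalMultilinearSeries.ofScalars_apply_eq, smul_eq_mul, Real.norm_eq_abs,
    Ring.choose_add_sub_one_eq_ascPochhammer_eval_div_factorial, div_mul_eq_mul_div] using this

theorem integral_tsum_mul_rpow_mul_exp_neg_mul_Ioi {a c : ℕ → ℝ} {s : ℝ} (ha : ∀ n, 0 < a n)
    (hs : 0 < s) (hsum : Summable fun n => |c n * ((1 / s) ^ a n * Gamma (a n))|) :
    ∫ t in Ioi 0, ∑' n, c n * (t ^ (a n - 1) * exp (-(s * t)))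
      = ∑' n, c n * ((1 / s) ^ a n * Gamma (a n)) := by
  have hM : ∀ n, 0 < (1 / s) ^ a n * Gamma (a n) := fun n =>
    mul_pos (by positivity) (Gamma_pos_of_pos (ha n))
  have hint : ∀ n, IntegrableOn (fun t => t ^ (a n - 1) * exp (-(s * t))) (Ioi 0) := fun n =>
    .of_integral_ne_zero (by rw [integral_rpow_mul_exp_neg_mul_Ioi (ha n) hs]; exact (hM n).ne')
  have hnorm : ∀ n, ∫ t in Ioi 0, ‖c n * (t ^ (a n - 1) * exp (-(s * t)))‖
      = |c n * ((1 / s) ^ a n * Gamma (a n))| := by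
    intro n
    rw [abs_mul, abs_of_pos (hM n), ← integral_rpow_mul_exp_neg_mul_Ioi (ha n) hs,
      ← integral_const_mul]
    refine setIntegral_congr_fun measurableSet_Ioi fun t ht => ?_
    rw [norm_mul, Real.norm_eq_abs, norm_of_nonneg (by have : 0 < t := ht; positivity)]
  rw [← integral_tsum_of_summable_integral_norm (fun n => (hint n).const_mul (c n))
    (by simpa only [hnorm] using hsum)]
  simp only [integral_const_mul, integral_rpow_mul_exp_neg_mul_Ioi (ha _) hs]

noncomputable def prabhakarMLCoeff (α β δ : ℝ) (n : ℕ) : ℝ :=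
  (ascPochhammer ℝ n).eval δ / (Gamma (n * α + β) * n.factorial)

theorem rpow_mul_exp_mul_prabhakarML_eq_tsum {β γ δ ω s t : ℝ} (ht : 0 < t) :
    t ^ (γ - 1) * exp (-s * t) * prabhakarML β γ δ (ω * t ^ β)
      = ∑' n : ℕ, prabhakarMLCoeff β γ δ n * ω ^ n * (t ^ (n * β + γ - 1) * exp (-(s * t))) := by
  rw [prabhakarML, ← tsum_mul_left]
  refine tsum_congr fun n => ?_
  rw [prabhakarMLCoeff, mul_pow, ← rpow_natCast (t ^ β), ← rpow_mul ht.le, mul_comm β,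
    add_sub_assoc, rpow_add ht, neg_mul]
  ring

theorem prabhakarMLCoeff_mul_pow_mul_one_div_rpow_mul_Gamma {β γ δ ω s : ℝ} (hβ : 0 ≤ β)
    (hγ : 0 < γ) (hs : 0 < s) (n : ℕ) :
    prabhakarMLCoeff β γ δ n * ω ^ n * ((1 / s) ^ (n * β + γ) * Gamma (n * β + γ))
      = (ascPochhammer ℝ n).eval δ * (ω * s ^ (-β)) ^ n / n.factorial * s ^ (-γ) := by
  have hΓ : Gamma (n * β + γ) ≠ 0 := (Gamma_pos_of_pos (by positivity)).ne'
  have hpow : (1 / s) ^ (n * β + γ) = (s ^ (-β)) ^ n * s ^ (-γ) := by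
    rw [one_div, inv_rpow hs.le, ← rpow_neg hs.le, neg_add, rpow_add hs, ← rpow_natCast,
      ← rpow_mul hs.le]
    ring_nf
  rw [prabhakarMLCoeff, hpow, mul_pow]
  field_simp

theorem abs_mul_rpow_neg_lt_one {β ω s : ℝ} (hβ : 0 < β) (hs : |ω| ^ (1 / β) < s) :
    |ω * s ^ (-β)| < 1 := by
  have hs0 : 0 < s := (rpow_nonneg (abs_nonneg ω) _).trans_lt hs
  have hωs : |ω| < s ^ β := by
    simpa [← rpow_mul (abs_nonneg ω), hβ.ne'] using rpow_lt_rpow (by positivity) hs hβ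
  rw [abs_mul, abs_of_pos (rpow_pos_of_pos hs0 _), rpow_neg hs0.le, ← div_eq_mul_inv]
  exact (div_lt_one (rpow_pos_of_pos hs0 β)).2 hωs

/-- Prabhakar's Laplace transform formula:
`∫₀^∞ t^{γ−1} e^{−st} E^δ_{β,γ}(ω t^β) dt = s^{−γ} (1 − ω s^{−β})^{−δ}`
for `β, γ > 0`, `δ, ω ∈ ℝ` and `s > |ω|^{1/β}`. -/
theorem prabhakarML_laplace (β γ δ ω s : ℝ) (hβ : 0 < β) (hγ : 0 < γ)
    (hs : s > |ω| ^ (1 / β)) :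
    ∫ t in Set.Ioi (0 : ℝ),
        t ^ (γ - 1) * Real.exp (-s * t) * prabhakarML β γ δ (ω * t ^ β)
      = s ^ (-γ) * (1 - ω * s ^ (-β)) ^ (-δ) := by
  have hs0 : 0 < s := (rpow_nonneg (abs_nonneg ω) _).trans_lt hs
  have hx := abs_mul_rpow_neg_lt_one hβ hs
  have hterm := prabhakarMLCoeff_mul_pow_mul_one_div_rpow_mul_Gamma (δ := δ) (ω := ω) hβ.le hγ hs0
  rw [setIntegral_congr_fun measurableSet_Ioi fun t ht => rpow_mul_exp_mul_prabhakarML_eq_tsum ht,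
    integral_tsum_mul_rpow_mul_exp_neg_mul_Ioi (fun n => by positivity) hs0]
  · rw [tsum_congr hterm, tsum_mul_right,
      (hasSum_ascPochhammer_eval_mul_pow_div_factorial δ hx).tsum_eq, mul_comm]
  · simpa only [hterm, abs_mul, abs_of_pos (rpow_pos_of_pos hs0 (-γ))]
      using (summable_abs_ascPochhammer_eval_mul_pow_div_factorial δ hx).mul_right _
end

section
/- (Inversion formula D, stated as a forward Laplace transform.) Let α > 0 and a, b be real numbers with a² − 4b > 0, and set λ = (−a + √(a²−4b))/2 and μ = (−a − √(a²−4b))/2, the real and distinct roots of x² + a x + b = 0. Then for every real s > 0 with s^α > max(|λ|, |μ|), ∫₀^∞ e^{−st} (1/√(a²−4b)) · [ (λ+a) E_α(λ t^α) − (μ+a) E_α(μ t^α) ] dt = (s^{2α−1} + a s^{α−1}) / (s^{2α} + a s^α + b). -/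
/-!
Expanding `E_α(c t^α)` termwise and using `∫₀^∞ t^{nα} e^{-st} dt = Γ(nα+1)/s^{nα+1}`, the Laplace
transform of `E_α(c t^α)` is the geometric series `∑ cⁿ/s^{nα+1} = s^{α-1}/(s^α - c)` for
`|c| < s^α`; the same computation with `|c|` bounds the series of `L¹` norms, which justifies the
interchange of sum and integral. The formula then follows by partial fractions, since
`s^{2α} + a s^α + b = (s^α - λ)(s^α - μ)` and `λ - μ = √(a² - 4b)`.
-/

/-- The two-parameter Mittag-Leffler function
`E_{α,β}(x) = ∑_{n=0}^∞ x^n / Γ(nα+β)` for real `α, β > 0`. -/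
noncomputable def mittagLeffler (α β : ℝ) (x : ℝ) : ℝ :=
  ∑' n : ℕ, x ^ n / Real.Gamma (n * α + β)

open MeasureTheory Set Real

theorem MeasureTheory.integrable_tsum_of_summable_integral_norm {X E ι : Type*}
    [MeasurableSpace X] {μ : Measure X} [NormedAddCommGroup E] [CompleteSpace E] [Countable ι]
    {F : ι → X → E} (hF_int : ∀ i, Integrable (F i) μ)
    (hF_sum : Summable fun i ↦ ∫ x, ‖F i x‖ ∂μ) :
    Integrable (fun x ↦ ∑' i, F i x) μ := by
  set G : ι → X →₁[μ] E := fun i ↦ (hF_int i).toL1 (F i)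
  have hG : ∑' i, ‖G i‖ₑ ≠ ⊤ := by
    simp only [G, ← ofReal_norm, L1.norm_of_fun_eq_integral_norm]
    rw [← ENNReal.ofReal_tsum_of_nonneg (fun i ↦ integral_nonneg fun _ ↦ norm_nonneg _) hF_sum]
    exact ENNReal.ofReal_ne_top
  refine (L1.integrable_coeFn (∑' i, G i)).congr ?_
  filter_upwards [Lp.hasSum_coeFn_tsum hG, ae_all_iff.2 fun i ↦ (hF_int i).coeFn_toL1]
    with x hsum hGF
  simp only [G, hGF] at hsum
  exact hsum.tsum_eq.symm

lemma integrableOn_rpow_mul_exp_neg_mul_Ioi {β s : ℝ} (hβ : -1 < β) (hs : 0 < s) :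
    IntegrableOn (fun t : ℝ ↦ t ^ β * exp (-s * t)) (Ioi 0) := by
  simpa only [rpow_one] using integrableOn_rpow_mul_exp_neg_mul_rpow hβ one_pos hs

noncomputable def mittagLefflerLaplaceTerm (α c s : ℝ) (n : ℕ) (t : ℝ) : ℝ :=
  c ^ n / Gamma (n * α + 1) * (t ^ (n * α) * exp (-s * t))

section

variable {α s : ℝ}

lemma exp_mul_mittagLeffler_eq_tsum (c : ℝ) {t : ℝ} (ht : 0 < t) :
    exp (-s * t) * mittagLeffler α 1 (c * t ^ α) = ∑' n, mittagLefflerLaplaceTerm α c s n t := by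
  rw [mittagLeffler, ← tsum_mul_left]
  refine tsum_congr fun n ↦ ?_
  rw [mittagLefflerLaplaceTerm, mul_pow, ← rpow_natCast (t ^ α), ← rpow_mul ht.le]
  ring_nf

lemma integrableOn_mittagLefflerLaplaceTerm (hα : 0 ≤ α) (hs : 0 < s) (c : ℝ) (n : ℕ) :
    IntegrableOn (mittagLefflerLaplaceTerm α c s n) (Ioi 0) :=
  (integrableOn_rpow_mul_exp_neg_mul_Ioi (by linarith [mul_nonneg n.cast_nonneg hα]) hs).const_mul _

lemma integral_mittagLefflerLaplaceTerm (hα : 0 ≤ α) (hs : 0 < s) (c : ℝ) (n : ℕ) :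
    ∫ t in Ioi 0, mittagLefflerLaplaceTerm α c s n t = (c / s ^ α) ^ n / s := by
  have hΓ : Gamma (n * α + 1) ≠ 0 := (Gamma_pos_of_pos (by positivity)).ne'
  have hpow : (1 / s) ^ (n * α + 1) = (s ^ α)⁻¹ ^ n / s := by
    rw [rpow_add_one (by positivity), mul_comm (n : ℝ) α, rpow_mul (by positivity), rpow_natCast,
      one_div, inv_rpow hs.le]
    ring
  simp only [mittagLefflerLaplaceTerm, neg_mul]
  rw [integral_const_mul, ← add_sub_cancel_right (n * α) 1,
    integral_rpow_mul_exp_neg_mul_Ioi (by positivity) hs, add_sub_cancel_right, hpow]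
  field_simp
  ring

lemma summable_integral_norm_mittagLefflerLaplaceTerm (hα : 0 ≤ α) (hs : 0 < s) {c : ℝ}
    (hc : |c| < s ^ α) :
    Summable fun n ↦ ∫ t in Ioi 0, ‖mittagLefflerLaplaceTerm α c s n t‖ := by
  have hnorm : ∀ n, ∫ t in Ioi 0, ‖mittagLefflerLaplaceTerm α c s n t‖
      = (|c| / s ^ α) ^ n / s := fun n ↦ by
    rw [← integral_mittagLefflerLaplaceTerm hα hs]
    refine setIntegral_congr_fun measurableSet_Ioi fun t (ht : 0 < t) ↦ ?_
    have : 0 < Gamma (n * α + 1) := Gamma_pos_of_pos (by positivity)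
    simp only [mittagLefflerLaplaceTerm, norm_mul, norm_div, norm_pow, norm_eq_abs,
      abs_of_pos this, abs_of_pos (rpow_pos_of_pos ht _), abs_of_pos (exp_pos _)]
  simp only [hnorm]
  refine (summable_geometric_of_lt_one (by positivity) ?_).div_const s
  rwa [div_lt_one (rpow_pos_of_pos hs α)]

lemma integrableOn_exp_mul_mittagLeffler (hα : 0 ≤ α) (hs : 0 < s) {c : ℝ} (hc : |c| < s ^ α) :
    IntegrableOn (fun t ↦ exp (-s * t) * mittagLeffler α 1 (c * t ^ α)) (Ioi 0) := by
  refine IntegrableOn.congr_fun ?_ (fun t ht ↦ (exp_mul_mittagLeffler_eq_tsum c ht).symm)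
    measurableSet_Ioi
  exact integrable_tsum_of_summable_integral_norm (integrableOn_mittagLefflerLaplaceTerm hα hs c)
    (summable_integral_norm_mittagLefflerLaplaceTerm hα hs hc)

theorem integral_exp_mul_mittagLeffler (hα : 0 ≤ α) (hs : 0 < s) {c : ℝ} (hc : |c| < s ^ α) :
    ∫ t in Ioi 0, exp (-s * t) * mittagLeffler α 1 (c * t ^ α) = s ^ (α - 1) / (s ^ α - c) := by
  have hX : 0 < s ^ α := rpow_pos_of_pos hs α
  have hq : ‖c / s ^ α‖ < 1 := by rwa [norm_div, norm_of_nonneg hX.le, div_lt_one hX]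
  rw [setIntegral_congr_fun measurableSet_Ioi fun t ht ↦ exp_mul_mittagLeffler_eq_tsum c ht,
    ← integral_tsum_of_summable_integral_norm (integrableOn_mittagLefflerLaplaceTerm hα hs c)
      (summable_integral_norm_mittagLefflerLaplaceTerm hα hs hc)]
  simp only [integral_mittagLefflerLaplaceTerm hα hs, tsum_div_const,
    tsum_geometric_of_norm_lt_one hq]
  rw [rpow_sub_one hs.ne']
  field_simp

end

/-- Inversion formula (D) as a forward Laplace transform: for `α > 0`, `a² − 4b > 0`,
roots `λ, μ` of `x² + ax + b = 0`, and `s > 0` with `s^α > max(|λ|,|μ|)`,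
`∫₀^∞ e^{−st} (1/√(a²−4b))·[(λ+a) E_α(λ t^α) − (μ+a) E_α(μ t^α)] dt
  = (s^{2α−1} + a s^{α−1})/(s^{2α} + a s^α + b)`. -/
theorem laplace_inversion_D (α a b s : ℝ) (hα : 0 < α) (hd : 0 < a ^ 2 - 4 * b)
    (hs : 0 < s)
    (hroot : s ^ α > max |(-a + Real.sqrt (a ^ 2 - 4 * b)) / 2|
                        |(-a - Real.sqrt (a ^ 2 - 4 * b)) / 2|) :
    ∫ t in Set.Ioi (0 : ℝ), Real.exp (-s * t) * (1 / Real.sqrt (a ^ 2 - 4 * b)) *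
        (((-a + Real.sqrt (a ^ 2 - 4 * b)) / 2 + a) *
            mittagLeffler α 1 ((-a + Real.sqrt (a ^ 2 - 4 * b)) / 2 * t ^ α)
          - ((-a - Real.sqrt (a ^ 2 - 4 * b)) / 2 + a) *
            mittagLeffler α 1 ((-a - Real.sqrt (a ^ 2 - 4 * b)) / 2 * t ^ α))
      = (s ^ (2 * α - 1) + a * s ^ (α - 1)) / (s ^ (2 * α) + a * s ^ α + b) := by
  have hr : 0 < √(a ^ 2 - 4 * b) := sqrt_pos.mpr hd
  have hr2 : √(a ^ 2 - 4 * b) ^ 2 = a ^ 2 - 4 * b := sq_sqrt hd.le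
  set r := √(a ^ 2 - 4 * b)
  set l := (-a + r) / 2
  set m := (-a - r) / 2
  have hl : |l| < s ^ α := (le_max_left _ _).trans_lt hroot
  have hm : |m| < s ^ α := (le_max_right _ _).trans_lt hroot
  set f := fun c t ↦ exp (-s * t) * mittagLeffler α 1 (c * t ^ α)
  have hsplit : ∀ t, exp (-s * t) * (1 / r) *
      ((l + a) * mittagLeffler α 1 (l * t ^ α) - (m + a) * mittagLeffler α 1 (m * t ^ α))
      = (l + a) / r * f l t - (m + a) / r * f m t := fun t ↦ by ring
  simp only [hsplit]
  rw [integral_sub ((integrableOn_exp_mul_mittagLeffler hα.le hs hl).const_mul _)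
      ((integrableOn_exp_mul_mittagLeffler hα.le hs hm).const_mul _),
    integral_const_mul, integral_const_mul, integral_exp_mul_mittagLeffler hα.le hs hl,
    integral_exp_mul_mittagLeffler hα.le hs hm]
  have hXl : s ^ α - l ≠ 0 := by linarith [(abs_lt.mp hl).2]
  have hXm : s ^ α - m ≠ 0 := by linarith [(abs_lt.mp hm).2]
  have hfactor : (s ^ α) ^ 2 + a * s ^ α + b = (s ^ α - l) * (s ^ α - m) := by
    simp only [l, m]; linear_combination hr2 / 4
  rw [show 2 * α - 1 = α + (α - 1) by ring, show 2 * α = α + α by ring, rpow_add hs,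
    rpow_add hs, ← sq, hfactor]
  field_simp
  simp only [l, m]
  ring
end

section
/- (Inversion formula E, stated as a forward Laplace transform.) Let α > 0 and a, b be real numbers with a² − 4b > 0, and set λ = (−a + √(a²−4b))/2 and μ = (−a − √(a²−4b))/2, the real and distinct roots of x² + a x + b = 0. Then for every real s > 0 with s^α > max(|λ|, |μ|), ∫₀^∞ e^{−st} (t^{α−1}/(λ−μ)) · [ E_{α,α}(λ t^α) − E_{α,α}(μ t^α) ] dt = 1 / (s^{2α} + a s^α + b). -/
/-!
For `|c| < s^α`, expanding `E_{α,α}` termwise writes `e^{-st} t^{α-1} E_{α,α}(c t^α)` as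
`∑ c^n e^{-st} t^{(n+1)α-1} / Γ((n+1)α)`, whose terms have Laplace transforms
`c^n s^{-(n+1)α}`. The same computation for `|c|` bounds the integrals of the absolute values
by a convergent geometric series, so sum and integral may be exchanged, and the transform is
`1/(s^α - c)`.
The theorem is then the partial fraction identity
`(1/(s^α - λ) - 1/(s^α - μ))/(λ - μ) = 1/((s^α - λ)(s^α - μ))`.
The Mittag-Leffler series converges everywhere by the ratio test, since log-convexity of `Γ`
gives `Γ(y + α) ≥ (y - 1)^α Γ(y)`.
-/

open Real Filter MeasureTheory Set

namespace MeasureTheory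

theorem integrable_tsum_of_summable_integral_norm_s8 {X E ι : Type*} [MeasurableSpace X]
    {μ : Measure X} [NormedAddCommGroup E] [CompleteSpace E] [Countable ι] {F : ι → X → E}
    (hF_int : ∀ i, Integrable (F i) μ) (hF_sum : Summable fun i ↦ ∫ a, ‖F i a‖ ∂μ) :
    Integrable (fun a ↦ ∑' i, F i a) μ := by
  have hL1 : ∑' i, ‖(hF_int i).toL1 (F i)‖ₑ ≠ ⊤ :=
    tsum_enorm_ne_top_iff_summable_norm.2
      (hF_sum.congr fun i ↦ (L1.norm_of_fun_eq_integral_norm (hF_int i)).symm)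
  refine (L1.integrable_coeFn (∑' i, (hF_int i).toL1 (F i))).congr ?_
  filter_upwards [Lp.coeFn_tsum hL1, ae_all_iff.2 fun i ↦ (hF_int i).coeFn_toL1] with a h1 h2
  rw [h1]
  exact tsum_congr h2

end MeasureTheory

namespace Real

theorem rpow_sub_one_mul_Gamma_le_Gamma_add {y α : ℝ} (hy : 1 < y) (hα : 0 < α) :
    (y - 1) ^ α * Gamma y ≤ Gamma (y + α) := by
  have hy0 : 0 < y - 1 := sub_pos.2 hy
  have hΓ : Gamma y = (y - 1) * Gamma (y - 1) := by
    rw [← Gamma_add_one hy0.ne', sub_add_cancel]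
  have hlogΓ : log (Gamma y) = log (y - 1) + log (Gamma (y - 1)) := by
    rw [hΓ, log_mul hy0.ne' (Gamma_pos_of_pos hy0).ne']
  have hslope := convexOn_log_Gamma.slope_mono_adjacent (x := y - 1) (y := y) (z := y + α)
    (mem_Ioi.2 hy0) (mem_Ioi.2 (by linarith)) (by linarith) (by linarith)
  simp only [Function.comp, sub_sub_cancel, div_one, add_sub_cancel_left] at hslope
  rw [hlogΓ, add_sub_cancel_right, le_div_iff₀ hα] at hslope
  rw [← log_le_log_iff (by positivity) (Gamma_pos_of_pos (by linarith)),
    log_mul (by positivity) (Gamma_pos_of_pos (by linarith)).ne', log_rpow hy0, hlogΓ]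
  linarith

theorem summable_pow_div_Gamma_mul_add {α : ℝ} (hα : 0 < α) (β x : ℝ) :
    Summable fun n : ℕ ↦ x ^ n / Gamma (n * α + β) := by
  have hy : Tendsto (fun n : ℕ ↦ n * α + β) atTop atTop :=
    tendsto_atTop_add_const_right _ _ (tendsto_natCast_atTop_atTop.atTop_mul_const hα)
  have hgrowth : Tendsto (fun n : ℕ ↦ (n * α + β - 1) ^ α) atTop atTop :=
    (tendsto_rpow_atTop hα).comp (tendsto_atTop_add_const_right _ _ hy)
  refine summable_of_ratio_norm_eventually_le (r := 1 / 2) (by norm_num) ?_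
  filter_upwards [hy.eventually_gt_atTop 1, hgrowth.eventually_ge_atTop (2 * |x|)]
    with n hn1 hn2
  have hΓ : 0 < Gamma (n * α + β) := Gamma_pos_of_pos (by linarith)
  have hΓ' : 0 < Gamma (n * α + β + α) := Gamma_pos_of_pos (by linarith)
  have hstep : 2 * |x| * Gamma (n * α + β) ≤ Gamma (n * α + β + α) :=
    (mul_le_mul_of_nonneg_right hn2 hΓ.le).trans (rpow_sub_one_mul_Gamma_le_Gamma_add hn1 hα)
  rw [show ((n + 1 : ℕ) : ℝ) * α + β = n * α + β + α by push_cast; ring]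
  simp only [norm_div, norm_pow, norm_eq_abs, abs_of_pos hΓ, abs_of_pos hΓ']
  rw [div_le_iff₀ hΓ', pow_succ]
  calc |x| ^ n * |x|
        = 1 / 2 * (|x| ^ n / Gamma (n * α + β)) * (2 * |x| * Gamma (n * α + β)) := by
          field_simp
    _ ≤ 1 / 2 * (|x| ^ n / Gamma (n * α + β)) * Gamma (n * α + β + α) := by gcongr

theorem rpow_natCast_mul_add {x : ℝ} (hx : 0 < x) (n : ℕ) (α β : ℝ) :
    x ^ (n * α + β) = (x ^ α) ^ n * x ^ β := by
  rw [rpow_add hx, mul_comm (n : ℝ), rpow_mul hx.le, rpow_natCast]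

theorem integrableOn_exp_neg_mul_mul_rpow_sub_one {a s : ℝ} (ha : 0 < a) (hs : 0 < s) :
    IntegrableOn (fun t ↦ exp (-s * t) * t ^ (a - 1)) (Ioi 0) := by
  have h := integrableOn_rpow_mul_exp_neg_mul_rpow (p := 1) (s := a - 1) (by linarith) one_pos hs
  simp only [rpow_one] at h
  simpa only [mul_comm (exp _)] using h

theorem integral_exp_neg_mul_mul_rpow_sub_one {a s : ℝ} (ha : 0 < a) (hs : 0 < s) :
    ∫ t in Ioi 0, exp (-s * t) * t ^ (a - 1) = Gamma a / s ^ a := by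
  simp_rw [mul_comm (exp _), neg_mul]
  rw [integral_rpow_mul_exp_neg_mul_Ioi ha hs, one_div, inv_rpow hs.le, inv_mul_eq_div]

end Real

theorem hasSum_pow_div_pow_succ {c r : ℝ} (h : |c| < r) :
    HasSum (fun n : ℕ ↦ c ^ n / r ^ (n + 1)) (r - c)⁻¹ := by
  have hr : 0 < r := (abs_nonneg c).trans_lt h
  have hcr : |c / r| < 1 := by rwa [abs_div, abs_of_pos hr, div_lt_one hr]
  have hrc : r - c ≠ 0 := (sub_pos.2 ((le_abs_self c).trans_lt h)).ne'
  have hgeom := (hasSum_geometric_of_abs_lt_one hcr).mul_left r⁻¹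
  rw [show r⁻¹ * (1 - c / r)⁻¹ = (r - c)⁻¹ by field_simp] at hgeom
  refine hgeom.congr_fun fun n ↦ ?_
  rw [div_pow, pow_succ]
  field_simp

theorem laplace_rpow_mul_mittagLeffler {α s c : ℝ} (hα : 0 < α) (hs : 0 < s)
    (hc : |c| < s ^ α) :
    IntegrableOn (fun t ↦ exp (-s * t) * (t ^ (α - 1) * mittagLeffler α α (c * t ^ α)))
      (Ioi 0) ∧
    ∫ t in Ioi 0, exp (-s * t) * (t ^ (α - 1) * mittagLeffler α α (c * t ^ α))
      = (s ^ α - c)⁻¹ := by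
  set T : ℝ → ℕ → ℝ → ℝ := fun c n t ↦
    c ^ n / Gamma (n * α + α) * (exp (-s * t) * t ^ (n * α + α - 1))
  have hpos (n : ℕ) : 0 < (n : ℝ) * α + α := by positivity
  have hT_int (c : ℝ) (n : ℕ) : IntegrableOn (T c n) (Ioi 0) :=
    (integrableOn_exp_neg_mul_mul_rpow_sub_one (hpos n) hs).const_mul _
  have hT (c : ℝ) (n : ℕ) : ∫ t in Ioi 0, T c n t = c ^ n / (s ^ α) ^ (n + 1) := by
    rw [integral_const_mul, integral_exp_neg_mul_mul_rpow_sub_one (hpos n) hs,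
      rpow_natCast_mul_add hs, pow_succ]
    field_simp [(Gamma_pos_of_pos (hpos n)).ne']
  -- On `t > 0` the norms of the terms for `c` are the terms for `|c|`.
  have hT_norm (n : ℕ) : ∫ t in Ioi 0, ‖T c n t‖ = |c| ^ n / (s ^ α) ^ (n + 1) := by
    rw [← hT |c| n]
    refine setIntegral_congr_fun measurableSet_Ioi fun t (ht : 0 < t) ↦ ?_
    simp only [T, norm_mul, norm_div, norm_pow, norm_eq_abs,
      abs_of_pos (Gamma_pos_of_pos (hpos n)), abs_of_pos (exp_pos _),
      abs_of_nonneg (rpow_nonneg ht.le _)]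
  have hexpand : ∀ t ∈ Ioi (0 : ℝ),
      exp (-s * t) * (t ^ (α - 1) * mittagLeffler α α (c * t ^ α)) = ∑' n, T c n t := by
    intro t (ht : 0 < t)
    rw [mittagLeffler, ← tsum_mul_left, ← tsum_mul_left]
    refine tsum_congr fun n ↦ ?_
    simp only [T]
    rw [add_sub_assoc, rpow_natCast_mul_add ht]
    ring
  have hT_summable : Summable fun n ↦ ∫ t in Ioi 0, ‖T c n t‖ :=
    (hasSum_pow_div_pow_succ (by rwa [abs_abs])).summable.congr fun n ↦ (hT_norm n).symm
  refine ⟨IntegrableOn.congr_fun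
    (integrable_tsum_of_summable_integral_norm_s8 (hT_int c) hT_summable)
    (fun t ht ↦ (hexpand t ht).symm) measurableSet_Ioi, ?_⟩
  rw [setIntegral_congr_fun measurableSet_Ioi hexpand,
    ← integral_tsum_of_summable_integral_norm (hT_int c) hT_summable, tsum_congr (hT c)]
  exact (hasSum_pow_div_pow_succ hc).tsum_eq

/-- Inversion formula (E) as a forward Laplace transform: for `α > 0`, `a² − 4b > 0`,
roots `λ, μ` of `x² + ax + b = 0`, and `s > 0` with `s^α > max(|λ|,|μ|)`,
`∫₀^∞ e^{−st} (t^{α−1}/(λ−μ))·[E_{α,α}(λ t^α) − E_{α,α}(μ t^α)] dt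
  = 1/(s^{2α} + a s^α + b)`. -/
theorem laplace_inversion_E (α a b s : ℝ) (hα : 0 < α) (hd : 0 < a ^ 2 - 4 * b)
    (hs : 0 < s)
    (hroot : s ^ α > max |(-a + Real.sqrt (a ^ 2 - 4 * b)) / 2|
                        |(-a - Real.sqrt (a ^ 2 - 4 * b)) / 2|) :
    ∫ t in Set.Ioi (0 : ℝ), Real.exp (-s * t) *
        (t ^ (α - 1) /
          ((-a + Real.sqrt (a ^ 2 - 4 * b)) / 2 - (-a - Real.sqrt (a ^ 2 - 4 * b)) / 2)) *
        (mittagLeffler α α ((-a + Real.sqrt (a ^ 2 - 4 * b)) / 2 * t ^ α)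
          - mittagLeffler α α ((-a - Real.sqrt (a ^ 2 - 4 * b)) / 2 * t ^ α))
      = 1 / (s ^ (2 * α) + a * s ^ α + b) := by
  set D := √(a ^ 2 - 4 * b)
  set l := (-a + D) / 2
  set m := (-a - D) / 2
  have hl : |l| < s ^ α := (le_max_left _ _).trans_lt hroot
  have hm : |m| < s ^ α := (le_max_right _ _).trans_lt hroot
  have hl_ne : s ^ α - l ≠ 0 := (sub_pos.2 ((le_abs_self l).trans_lt hl)).ne'
  have hm_ne : s ^ α - m ≠ 0 := (sub_pos.2 ((le_abs_self m).trans_lt hm)).ne'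
  have hlm : l - m ≠ 0 := by
    rw [show l - m = D by ring]
    exact (sqrt_pos.2 hd).ne'
  have hfactor : s ^ (2 * α) + a * s ^ α + b = (s ^ α - l) * (s ^ α - m) := by
    rw [two_mul, rpow_add hs]
    linear_combination (1 / 4 : ℝ) * sq_sqrt hd.le
  obtain ⟨hl_int, hl_eq⟩ := laplace_rpow_mul_mittagLeffler hα hs hl
  obtain ⟨hm_int, hm_eq⟩ := laplace_rpow_mul_mittagLeffler hα hs hm
  calc _ = (l - m)⁻¹ *
        ((∫ t in Ioi 0, exp (-s * t) * (t ^ (α - 1) * mittagLeffler α α (l * t ^ α)))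
          - ∫ t in Ioi 0, exp (-s * t) * (t ^ (α - 1) * mittagLeffler α α (m * t ^ α))) := by
        rw [← integral_sub hl_int hm_int, ← integral_const_mul]
        congr 1
        funext t
        ring
    _ = 1 / (s ^ (2 * α) + a * s ^ α + b) := by
        rw [hl_eq, hm_eq, hfactor]
        field_simp
        ring
end
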